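/- arXiv:2003.04009 — 3 statements merged into one kernel-verified Lean document; each statement's English description precedes it below -/
import Mathlib

section
/- For all real ν with 3 ≤ ν, one has (1 - 2^(-1/(ν-1)))^(ν-1) · (1 + 1/(ν-1))^(ν/2) ≤ 1. -/
/-!
Put `s = ν - 1 ≥ 2`. Since `2 ^ (-1/s) ≥ 2 ^ (-1/2) ≥ 7/10`, the first factor is at most
`(3/10) ^ s ≤ 9/100`. Since `1 + x ≤ exp x` and `ν / (2 s) ≤ 1`, the second factor is at most `e < 3`.
-/

open Real

lemma seven_tenths_le_two_rpow_neg_inv {s : ℝ} (hs : 2 ≤ s) : 7 / 10 ≤ (2 : ℝ) ^ (-(1 / s)) := by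
  rw [show -(1 / s) = (-s)⁻¹ by rw [one_div, inv_neg],
    le_rpow_inv_iff_of_neg (by norm_num) (by norm_num) (by linarith)]
  calc (2 : ℝ) ≤ (7 / 10) ^ (-2 : ℝ) := by norm_num
    _ ≤ (7 / 10) ^ (-s) := rpow_le_rpow_of_exponent_ge (by norm_num) (by norm_num) (by linarith)

lemma one_sub_two_rpow_neg_inv_rpow_le {s : ℝ} (hs : 2 ≤ s) :
    (1 - (2 : ℝ) ^ (-(1 / s))) ^ s ≤ 9 / 100 := by
  have hlt : (2 : ℝ) ^ (-(1 / s)) < 1 :=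
    rpow_lt_one_of_one_lt_of_neg one_lt_two (neg_neg_of_pos (by positivity))
  have hle := seven_tenths_le_two_rpow_neg_inv hs
  calc (1 - (2 : ℝ) ^ (-(1 / s))) ^ s ≤ (1 - (2 : ℝ) ^ (-(1 / s))) ^ (2 : ℝ) :=
        rpow_le_rpow_of_exponent_ge (by linarith) (by linarith) hs
    _ ≤ (3 / 10) ^ (2 : ℝ) := rpow_le_rpow (by linarith) (by linarith) (by norm_num)
    _ = 9 / 100 := by norm_num

lemma one_add_one_div_rpow_le_exp {x t : ℝ} (hx : 0 < x) (ht : 0 ≤ t) :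
    (1 + 1 / x) ^ t ≤ exp (t / x) :=
  calc (1 + 1 / x) ^ t ≤ exp (1 / x) ^ t :=
        rpow_le_rpow (by positivity) (by linarith [add_one_le_exp (1 / x)]) ht
    _ = exp (t / x) := by rw [← exp_mul]; ring_nf

theorem stmt_3 (ν : ℝ) (hν : 3 ≤ ν) :
    (1 - (2:ℝ) ^ (-(1 / (ν - 1)))) ^ (ν - 1) * (1 + 1 / (ν - 1)) ^ (ν / 2) ≤ 1 := by
  have hs : 2 ≤ ν - 1 := by linarith
  have hB : (1 + 1 / (ν - 1)) ^ (ν / 2) ≤ exp 1 := by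
    refine (one_add_one_div_rpow_le_exp (by linarith) (by linarith)).trans (exp_le_exp.2 ?_)
    rw [div_le_one (by linarith)]
    linarith
  calc (1 - (2:ℝ) ^ (-(1 / (ν - 1)))) ^ (ν - 1) * (1 + 1 / (ν - 1)) ^ (ν / 2)
      ≤ 9 / 100 * exp 1 :=
        mul_le_mul (one_sub_two_rpow_neg_inv_rpow_le hs) hB (by positivity) (by norm_num)
    _ ≤ 1 := by linarith [exp_one_lt_d9]
end

section
/- Let p, ν be reals with n < p ≤ n+1 ≤ ν and n ≥ 3, and define C(p,n) = 2·((p-1)/p)^(p/2)·((n-1)(p-2)/(p-n))^(p/2-1). Then 2^(p-2)·(1/(p-1))^(p-1)·C(p,n) ≤ (2^n/n)·(p-n)^(1-p/2). -/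
/-!
With `q = p/2 - 1 ≥ 0`, the powers of `2`, `p` and `p - 1` on the left-hand side collect into
`2^(p-1)/p · ((n-1)(p-2) / (p(p-1)))^q · (p-n)^(-q)`. The base of the middle power is at most `1`
because `n ≤ p`, and `2^(p-1)/p ≤ 2^n/n` because `n < p ≤ n + 1`.
-/

open Real

lemma two_rpow_sub_one_div_le_two_rpow_div {x p : ℝ} (hx : 0 < x) (hxp : x ≤ p)
    (hpx : p ≤ x + 1) : (2 : ℝ) ^ (p - 1) / p ≤ 2 ^ x / x := by
  gcongr
  · norm_num
  · linarith

lemma two_rpow_sub_two_mul_rpow_eq {p B : ℝ} (hp : 1 < p) (hB : 0 ≤ B) :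
    2 ^ (p - 2) * (1 / (p - 1)) ^ (p - 1) * (2 * ((p - 1) / p) ^ (p / 2) * B ^ (p / 2 - 1))
      = 2 ^ (p - 1) / p * (B / (p * (p - 1))) ^ (p / 2 - 1) := by
  have hp0 : 0 < p := by linarith
  have hp1 : 0 < p - 1 := by linarith
  have h2 : (2 : ℝ) ^ (p - 1) = 2 ^ (p - 2) * 2 := by
    rw [← rpow_add_one two_ne_zero]; ring_nf
  have hpow_p : p ^ (p / 2) = p ^ (p / 2 - 1) * p := by
    rw [← rpow_add_one hp0.ne']; ring_nf
  have hpow_p1 : (p - 1) ^ (p - 1) = (p - 1) ^ (p / 2) * (p - 1) ^ (p / 2 - 1) := by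
    rw [← rpow_add hp1]; ring_nf
  rw [div_rpow hB (by positivity), mul_rpow hp0.le hp1.le, div_rpow hp1.le hp0.le, one_div,
    inv_rpow hp1.le, h2, hpow_p, hpow_p1]
  field_simp

theorem stmt_4_general (n : ℕ) (hn : 3 ≤ n) (p : ℝ) (hp : (n : ℝ) < p) (hpn : p ≤ (n : ℝ) + 1) :
    2 ^ (p - 2) * (1 / (p - 1)) ^ (p - 1) *
        (2 * ((p - 1) / p) ^ (p / 2) * (((n : ℝ) - 1) * (p - 2) / (p - (n : ℝ))) ^ (p / 2 - 1))
      ≤ ((2 : ℝ) ^ (n : ℝ) / (n : ℝ)) * (p - (n : ℝ)) ^ (1 - p / 2) := by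
  have hn3 : (3 : ℝ) ≤ n := by exact_mod_cast hn
  have hpn0 : 0 < p - n := by linarith
  have hpp1 : 0 < p * (p - 1) := by nlinarith
  set B := ((n : ℝ) - 1) * (p - 2)
  have hB : 0 ≤ B := mul_nonneg (by linarith) (by linarith)
  have hratio_nonneg : 0 ≤ B / (p * (p - 1)) := div_nonneg hB hpp1.le
  have hratio_le : B / (p * (p - 1)) ≤ 1 := (div_le_one hpp1).2 (by nlinarith)
  have hsplit : (B / (p - n)) ^ (p / 2 - 1) = B ^ (p / 2 - 1) * (p - n) ^ (1 - p / 2) := by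
    rw [div_rpow hB hpn0.le, div_eq_mul_inv, ← rpow_neg hpn0.le, neg_sub]
  calc _ = 2 ^ (p - 1) / p * (B / (p * (p - 1))) ^ (p / 2 - 1) * (p - n) ^ (1 - p / 2) := by
        rw [hsplit, ← two_rpow_sub_two_mul_rpow_eq (by linarith) hB]; ring
    _ ≤ 2 ^ (n : ℝ) / n * 1 * (p - n) ^ (1 - p / 2) := by
        gcongr ?_ * ?_ * _
        · exact two_rpow_sub_one_div_le_two_rpow_div (by linarith) hp.le hpn
        · exact rpow_le_one hratio_nonneg hratio_le (by linarith)
    _ = _ := by ring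

theorem stmt_4 (n : ℕ) (hn : 3 ≤ n) (p ν : ℝ) (hp : (n : ℝ) < p) (hpn : p ≤ (n : ℝ) + 1)
    (hν : (n : ℝ) + 1 ≤ ν) :
    2 ^ (p - 2) * (1 / (p - 1)) ^ (p - 1) *
        (2 * ((p - 1) / p) ^ (p / 2) * (((n : ℝ) - 1) * (p - 2) / (p - (n : ℝ))) ^ (p / 2 - 1))
      ≤ ((2 : ℝ) ^ (n : ℝ) / (n : ℝ)) * (p - (n : ℝ)) ^ (1 - p / 2) :=
  stmt_4_general n hn p hp hpn
end

section
/- Let ℓ: ℝ → [0,∞) be a convex even C² function with ℓ(0) = 1 and ℓ'(t) = log t for t ≥ 2 (so ℓ''(t) = 1/t for t ≥ 2). Then for every integer n ≥ 3 there exists a constant γ > 0 (depending only on n and ℓ restricted to [0,2]) such that for all R ≥ 2: ∫_{-R}^{R} (ℓ''(t))^(n/2)·(ℓ(t))^(n/2 - 1) dt ≤ γ·(log R)^(n/2). -/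
/-!
On `[2, R]` the integrand is `t ^ (-n/2) * ℓ t ^ (n/2 - 1)`, and the mean value theorem gives
`ℓ t ≤ (ℓ 2 + 1) * log R * t` there, so the integrand is at most
`((ℓ 2 + 1) * log R) ^ (n/2 - 1) / t`, whose integral over `[2, R]` is `O((log R) ^ (n/2))`.
By evenness the piece over `[-R, -2]` is the same, and the piece over `[-2, 2]` is a constant,
absorbed because `log R ≥ log 2 > 0`.
-/

open Real intervalIntegral

theorem Function.Even.deriv {f : ℝ → ℝ} (hf : Function.Even f) : Function.Odd (deriv f) := by
  intro t
  have := deriv_comp_neg f (x := t)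
  rw [funext hf] at this
  linarith

theorem Function.Odd.deriv {f : ℝ → ℝ} (hf : Function.Odd f) : Function.Even (deriv f) := by
  intro t
  have := deriv_comp_neg f (x := t)
  rw [funext hf, deriv.fun_neg] at this
  linarith

theorem intervalIntegral.integral_symm_eq_add_two_mul_of_even {f : ℝ → ℝ} (hf : Continuous f)
    (heven : Function.Even f) (a R : ℝ) :
    ∫ t in (-R)..R, f t = (∫ t in (-a)..a, f t) + 2 * ∫ t in a..R, f t := by
  have hleft : ∫ t in (-R)..(-a), f t = ∫ t in a..R, f t := by
    rw [← integral_comp_neg]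
    exact integral_congr fun t _ => heven t
  rw [← integral_add_adjacent_intervals (hf.intervalIntegrable (-R) (-a))
    (hf.intervalIntegrable (-a) R), ← integral_add_adjacent_intervals
    (hf.intervalIntegrable (-a) a) (hf.intervalIntegrable a R), hleft]
  ring

theorem inv_rpow_mul_rpow_le {p t x K : ℝ} (hp : 1 ≤ p) (ht : 0 < t) (hx : 0 ≤ x)
    (hxK : x ≤ K * t) : t⁻¹ ^ p * x ^ (p - 1) ≤ K ^ (p - 1) * t⁻¹ := by
  have hK : 0 ≤ K := nonneg_of_mul_nonneg_left (hx.trans hxK) ht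
  calc t⁻¹ ^ p * x ^ (p - 1) ≤ t⁻¹ ^ p * (K * t) ^ (p - 1) := by gcongr
    _ = K ^ (p - 1) * (t ^ (-p) * t ^ (p - 1)) := by
      rw [mul_rpow hK ht.le, inv_rpow ht.le, rpow_neg ht.le]; ring
    _ = K ^ (p - 1) * t⁻¹ := by rw [← rpow_add ht, show -p + (p - 1) = -1 by ring, rpow_neg_one]

theorem integral_inv_rpow_mul_rpow_le {g : ℝ → ℝ} {p K a R : ℝ} (hp : 1 ≤ p) (ha : 0 < a)
    (haR : a ≤ R) (hg : ContinuousOn g (Set.Icc a R)) (hg0 : ∀ t ∈ Set.Icc a R, 0 ≤ g t)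
    (hgK : ∀ t ∈ Set.Icc a R, g t ≤ K * t) :
    ∫ t in a..R, t⁻¹ ^ p * g t ^ (p - 1) ≤ K ^ (p - 1) * log (R / a) := by
  have hpos : ∀ t ∈ Set.Icc a R, 0 < t := fun t ht => ha.trans_le ht.1
  have hint : IntervalIntegrable (fun t => t⁻¹ ^ p * g t ^ (p - 1)) MeasureTheory.volume a R := by
    refine (ContinuousOn.mul ?_ (hg.rpow_const fun _ _ => Or.inr (by linarith))
      ).intervalIntegrable_of_Icc haR
    exact (continuousOn_inv₀.mono fun t ht => (hpos t ht).ne').rpow_const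
      fun _ _ => Or.inr (by linarith)
  have hinv : IntervalIntegrable (fun t => K ^ (p - 1) * t⁻¹) MeasureTheory.volume a R :=
    (intervalIntegrable_inv (fun t ht => (hpos t (Set.uIcc_of_le haR ▸ ht)).ne')
      continuousOn_id).const_mul _
  calc ∫ t in a..R, t⁻¹ ^ p * g t ^ (p - 1) ≤ ∫ t in a..R, K ^ (p - 1) * t⁻¹ :=
        integral_mono_on haR hint hinv fun t ht =>
          inv_rpow_mul_rpow_le hp (hpos t ht) (hg0 t ht) (hgK t ht)
    _ = K ^ (p - 1) * log (R / a) := by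
      rw [integral_const_mul, integral_inv_of_pos ha (ha.trans_le haR)]

theorem le_mul_mul_log_of_deriv_eq_log {f : ℝ → ℝ} (hf : Differentiable ℝ f) (hf2 : 0 ≤ f 2)
    (hd : ∀ t, 2 ≤ t → deriv f t = log t) {t R : ℝ} (ht : 2 ≤ t) (htR : t ≤ R) :
    f t ≤ (f 2 + 1) * log R * t := by
  have hmv : f t - f 2 ≤ log R * (t - 2) :=
    (convex_Icc 2 t).image_sub_le_mul_sub_of_deriv_le hf.continuous.continuousOn
      hf.differentiableOn (fun x hx => by
        rw [interior_Icc] at hx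
        rw [hd x hx.1.le]
        exact log_le_log (by linarith [hx.1]) (hx.2.le.trans htR))
      2 ⟨le_rfl, ht⟩ t ⟨ht, le_rfl⟩ ht
  have hlog : 1 / 2 < log R := by
    linarith [log_two_gt_d9, log_le_log two_pos (ht.trans htR)]
  have hone : 1 ≤ log R * t := by nlinarith
  nlinarith [mul_le_mul_of_nonneg_left hone hf2]

theorem integral_deriv_deriv_rpow_mul_rpow_le {ℓ : ℝ → ℝ} (hℓ : Differentiable ℝ ℓ)
    (hnonneg : ∀ t, 0 ≤ ℓ t) (hd : ∀ t, 2 ≤ t → deriv ℓ t = log t)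
    (hd2 : ∀ t, 2 ≤ t → deriv (deriv ℓ) t = 1 / t) {p R : ℝ} (hp : 1 ≤ p) (hR : 2 ≤ R) :
    ∫ t in (2 : ℝ)..R, deriv (deriv ℓ) t ^ p * ℓ t ^ (p - 1)
      ≤ (ℓ 2 + 1) ^ (p - 1) * log R ^ p := by
  have hlogR : 0 < log R := log_pos (by linarith)
  calc ∫ t in (2 : ℝ)..R, deriv (deriv ℓ) t ^ p * ℓ t ^ (p - 1)
      = ∫ t in (2 : ℝ)..R, t⁻¹ ^ p * ℓ t ^ (p - 1) := integral_congr fun t ht => by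
        rw [Set.uIcc_of_le hR] at ht
        simp only [hd2 t ht.1, one_div]
    _ ≤ ((ℓ 2 + 1) * log R) ^ (p - 1) * log (R / 2) :=
      integral_inv_rpow_mul_rpow_le hp two_pos hR hℓ.continuous.continuousOn
        (fun t _ => hnonneg t)
        fun t ht => le_mul_mul_log_of_deriv_eq_log hℓ (hnonneg 2) hd ht.1 ht.2
    _ ≤ ((ℓ 2 + 1) * log R) ^ (p - 1) * log R :=
      mul_le_mul_of_nonneg_left (log_le_log (by linarith) (by linarith))
        (rpow_nonneg (mul_nonneg (by linarith [hnonneg 2]) hlogR.le) _)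
    _ = (ℓ 2 + 1) ^ (p - 1) * log R ^ p := by
      rw [mul_rpow (by linarith [hnonneg 2]) hlogR.le, mul_assoc, ← rpow_add_one hlogR.ne',
        sub_add_cancel]

theorem stmt_10_general (ℓ : ℝ → ℝ) (heven : ∀ t, ℓ (-t) = ℓ t)
    (hC2 : ContDiff ℝ 2 ℓ) (hnonneg : ∀ t, 0 ≤ ℓ t)
    (hd : ∀ t : ℝ, 2 ≤ t → deriv ℓ t = Real.log t)
    (hd2 : ∀ t : ℝ, 2 ≤ t → deriv (deriv ℓ) t = 1 / t)
    (n : ℕ) (hn : 3 ≤ n) :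
    ∃ γ > (0:ℝ), ∀ R : ℝ, 2 ≤ R →
      ∫ t in (-R)..R, (deriv (deriv ℓ) t) ^ ((n : ℝ) / 2) * (ℓ t) ^ ((n : ℝ) / 2 - 1)
        ≤ γ * (Real.log R) ^ ((n : ℝ) / 2) := by
  set p : ℝ := (n : ℝ) / 2
  have hp : 1 ≤ p := by
    have : (3 : ℝ) ≤ n := by exact_mod_cast hn
    show 1 ≤ (n : ℝ) / 2
    linarith
  set f : ℝ → ℝ := fun t => deriv (deriv ℓ) t ^ p * ℓ t ^ (p - 1)
  have hf : Continuous f :=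
    ((hC2.iterate_deriv' 0 2).continuous.rpow_const fun _ => Or.inr (by linarith)).mul
      (hC2.continuous.rpow_const fun _ => Or.inr (by linarith))
  have hfeven : Function.Even f := fun t => by
    simp only [f, (Function.Even.deriv heven).deriv t, heven t]
  set C := ∫ t in (-2 : ℝ)..2, f t
  have hlog2 : 0 < log 2 ^ p := rpow_pos_of_pos (log_pos one_lt_two) p
  have hM : 0 ≤ (ℓ 2 + 1) ^ (p - 1) := rpow_nonneg (by linarith [hnonneg 2]) _
  refine ⟨2 * (ℓ 2 + 1) ^ (p - 1) + |C| / log 2 ^ p + 1, by positivity, fun R hR => ?_⟩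
  have hlog2R : log 2 ^ p ≤ log R ^ p := by gcongr
  have hmid : C ≤ |C| / log 2 ^ p * log R ^ p := by
    rw [div_mul_eq_mul_div, le_div_iff₀ hlog2]
    nlinarith [le_abs_self C, abs_nonneg C]
  rw [integral_symm_eq_add_two_mul_of_even hf hfeven 2 R]
  linarith [integral_deriv_deriv_rpow_mul_rpow_le (hC2.differentiable (by norm_num)) hnonneg hd
    hd2 hp hR, rpow_nonneg (log_nonneg (by linarith : (1 : ℝ) ≤ R)) p]

theorem stmt_10 (ℓ : ℝ → ℝ) (hconv : ConvexOn ℝ Set.univ ℓ) (heven : ∀ t, ℓ (-t) = ℓ t)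
    (hC2 : ContDiff ℝ 2 ℓ) (hnonneg : ∀ t, 0 ≤ ℓ t) (h0 : ℓ 0 = 1)
    (hd : ∀ t : ℝ, 2 ≤ t → deriv ℓ t = Real.log t)
    (hd2 : ∀ t : ℝ, 2 ≤ t → deriv (deriv ℓ) t = 1 / t)
    (n : ℕ) (hn : 3 ≤ n) :
    ∃ γ > (0:ℝ), ∀ R : ℝ, 2 ≤ R →
      ∫ t in (-R)..R, (deriv (deriv ℓ) t) ^ ((n : ℝ) / 2) * (ℓ t) ^ ((n : ℝ) / 2 - 1)
        ≤ γ * (Real.log R) ^ ((n : ℝ) / 2) :=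
  stmt_10_general ℓ heven hC2 hnonneg hd hd2 n hn
end
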